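/- Let Γ be the subgroup of SL(2,ℝ) generated by the five matrices γ₁ = [[1,1],[0,1]], γ₂ = [[0, −1/√11],[√11, 0]], γ₃ = [[√11, 5/√11],[2√11, √11]], γ₄ = [[10,3],[33,10]], γ₅ = [[23,8],[66,23]]. Then Γ is commensurable with the image of SL(2,ℤ) in SL(2,ℝ): the intersection of Γ with the image of SL(2,ℤ) has finite index in both Γ and in the image of SL(2,ℤ). (This expresses that the associated reflection group Γ_ref is arithmetic.) -/

import Mathlib

open Matrix
open scoped MatrixGroups

/-- `γ₁ = [[1,1],[0,1]]`. -/
def gamma1 : SL(2, ℝ) := ⟨!![1, 1; 0, 1], by norm_num [Matrix.det_fin_two_of]⟩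

/-- `γ₂ = [[0, −1/√11],[√11, 0]]`. -/
noncomputable def gamma2 : SL(2, ℝ) :=
  ⟨!![0, -1 / Real.sqrt 11; Real.sqrt 11, 0], by
    have h : Real.sqrt 11 ≠ 0 := by positivity
    rw [Matrix.det_fin_two_of]
    field_simp
    norm_num⟩

/-- `γ₃ = [[√11, 5/√11],[2√11, √11]]`. -/
noncomputable def gamma3 : SL(2, ℝ) :=
  ⟨!![Real.sqrt 11, 5 / Real.sqrt 11; 2 * Real.sqrt 11, Real.sqrt 11], by
    have h11 : Real.sqrt 11 * Real.sqrt 11 = 11 :=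
      Real.mul_self_sqrt (by norm_num)
    have h : Real.sqrt 11 ≠ 0 := by positivity
    rw [Matrix.det_fin_two_of]
    field_simp
    nlinarith [h11]⟩

/-- `γ₄ = [[10,3],[33,10]]`. -/
def gamma4 : SL(2, ℝ) := ⟨!![10, 3; 33, 10], by norm_num [Matrix.det_fin_two_of]⟩

/-- `γ₅ = [[23,8],[66,23]]`. -/
def gamma5 : SL(2, ℝ) := ⟨!![23, 8; 66, 23], by norm_num [Matrix.det_fin_two_of]⟩

/-- The entrywise embedding `SL(2,ℤ) →* SL(2,ℝ)`. -/
def mapSL : SL(2, ℤ) →* SL(2, ℝ) :=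
  Matrix.SpecialLinearGroup.map (Int.castRingHom ℝ)

/-!
Let `Λ` be the image of `Γ₀(11)` in `SL(2,ℝ)`. The generators `γ₁, γ₄, γ₅` lie in `Λ`, and `γ₂`
normalises `Λ`: it acts on `Γ₀(11)` as the Fricke involution
`[[a, b], [11c, d]] ↦ [[d, -c], [-11b, a]]`. Since moreover `γ₂² = -1` and `γ₂γ₃ ∈ Λ`, the group
`Γ` generated by the `γᵢ` lies in `Λ ∪ γ₂⁻¹Λ`, so `Γ ∩ SL(2,ℤ)` has index at most 2 in `Γ`.

Conversely `Γ ∩ SL(2,ℤ)` contains the group `Δ` generated by eight explicit integer matrices, all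
products of the `γᵢ`. A Euclidean descent on the lower-left entry `c` (translate the upper-left
entry into `[-|c|/2, |c|/2]` with a power of `T`, then multiply by one of ten elements of `Δ`
whose isometric circles cover that interval) shows `Γ₀(11) = Δ ∪ ΔR`, so `Δ`, and with it
`Γ ∩ SL(2,ℤ)`, has finite index in `SL(2,ℤ)`.
-/

open ModularGroup CongruenceSubgroup Matrix.SpecialLinearGroup

section CosetCover

variable {G : Type*} [Group G]

theorem Subgroup.relIndex_ne_zero_of_forall_mem_or_mul_mem {H K : Subgroup G} {w : G}
    (hw : w ∈ K) (h : ∀ g ∈ K, g ∈ H ∨ w * g ∈ H) : H.relIndex K ≠ 0 := by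
  have : Finite (K ⧸ H.subgroupOf K) := by
    refine Finite.of_surjective (fun b : Bool =>
      QuotientGroup.mk (s := H.subgroupOf K) (if b then ⟨w⁻¹, inv_mem hw⟩ else 1)) ?_
    intro q
    induction q using QuotientGroup.induction_on with | H g =>
    rcases h g g.2 with hg | hg
    · exact ⟨false, QuotientGroup.eq.2 (by simpa [mem_subgroupOf] using hg)⟩
    · exact ⟨true, QuotientGroup.eq.2 (by simpa [mem_subgroupOf] using hg)⟩
  exact Subgroup.index_ne_zero_of_finite

theorem Subgroup.forall_mem_closure_mem_or_mul_mem {Λ : Subgroup G} {w : G}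
    (hconj : ∀ g ∈ Λ, w * g * w⁻¹ ∈ Λ) (hsq : w * w ∈ Λ) {S : Set G}
    (hS : ∀ s ∈ S, s ∈ Λ ∨ w * s ∈ Λ) : ∀ g ∈ closure S, g ∈ Λ ∨ w * g ∈ Λ := by
  have hconj' : ∀ g ∈ Λ, w⁻¹ * g * w ∈ Λ := fun g hg => by
    simpa [mul_assoc] using mul_mem (mul_mem (inv_mem hsq) (hconj g hg)) hsq
  intro g hg
  induction hg using closure_induction with
  | mem s hs => exact hS s hs
  | one => exact .inl (one_mem _)
  | mul x y _ _ hx hy =>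
    rcases hx with hx | hx <;> rcases hy with hy | hy
    · exact .inl (mul_mem hx hy)
    · exact .inr (by simpa [mul_assoc] using mul_mem (hconj x hx) hy)
    · exact .inr (by simpa [mul_assoc] using mul_mem hx hy)
    · exact .inl (by simpa [mul_assoc] using mul_mem (mul_mem (hconj' _ hx) (inv_mem hsq)) hy)
  | inv x _ hx =>
    rcases hx with hx | hx
    · exact .inl (inv_mem hx)
    · exact .inr (by simpa [mul_assoc] using mul_mem (hconj _ (inv_mem hx)) hsq)

end CosetCover

theorem Int.exists_abs_two_mul_add_mul_le (a : ℤ) {c : ℤ} (hc : 0 < c) :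
    ∃ k : ℤ, |2 * (a + k * c)| ≤ c := by
  obtain ⟨k, hk⟩ := Int.dvd_bmod_sub_self (x := a) (m := c.toNat)
  have h1 := Int.le_bmod (x := a) (m := c.toNat) (by omega)
  have h2 := Int.bmod_lt (x := a) (m := c.toNat) (by omega)
  rw [Int.toNat_of_nonneg hc.le] at hk h1 h2
  refine ⟨k, ?_⟩
  rw [show a + k * c = a.bmod c.toNat by linarith, abs_le]
  omega

theorem CongruenceSubgroup.mem_Gamma0_iff_dvd {N : ℕ} {M : SL(2, ℤ)} :
    M ∈ Gamma0 N ↔ (N : ℤ) ∣ M 1 0 := by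
  rw [Gamma0_mem]
  exact ZMod.intCast_zmod_eq_zero_iff_dvd _ N

theorem ModularGroup.T_zpow_mul_apply_zero_zero (n : ℤ) (M : SL(2, ℤ)) :
    (T ^ n * M) 0 0 = M 0 0 + n * M 1 0 := by
  simp [coe_T_zpow, mul_apply, Fin.sum_univ_two]

theorem ModularGroup.exists_eq_mul_T_zpow_of_col_eq {M B : SL(2, ℤ)} (h0 : M 0 0 = B 0 0)
    (h1 : M 1 0 = B 1 0) : ∃ n : ℤ, M = B * T ^ n := by
  have hB := B.det_coe
  have hM := M.det_coe
  rw [det_fin_two] at hB hM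
  rw [h0, h1] at hM
  refine ⟨(B⁻¹ * M) 0 1, ?_⟩
  rw [← inv_mul_eq_iff_eq_mul]
  ext i j
  fin_cases i <;> fin_cases j <;>
    simp [coe_T_zpow, coe_inv, adjugate_fin_two, mul_apply, Fin.sum_univ_two, h0, h1] <;>
    linarith

namespace Gamma0Eleven

def U : SL(2, ℤ) := ⟨!![1, 0; 11, 1], by norm_num [det_fin_two_of]⟩
def V : SL(2, ℤ) := ⟨!![2, -1; 11, -5], by norm_num [det_fin_two_of]⟩
def A : SL(2, ℤ) := ⟨!![-2, -1; 11, 5], by norm_num [det_fin_two_of]⟩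
def G4 : SL(2, ℤ) := ⟨!![10, 3; 33, 10], by norm_num [det_fin_two_of]⟩
def G5 : SL(2, ℤ) := ⟨!![23, 8; 66, 23], by norm_num [det_fin_two_of]⟩
def W : SL(2, ℤ) := ⟨!![23, -6; -88, 23], by norm_num [det_fin_two_of]⟩

/-- The descent below gets stuck exactly at the first columns `(±3, 11)` and `(±4, 11)`; these are
the first columns of elements of `Δ * R`, which is why `Γ₀(11) = Δ ∪ Δ * R`. -/
def R : SL(2, ℤ) := ⟨!![3, 1; 11, 4], by norm_num [det_fin_two_of]⟩

@[simp] lemma coe_U : (U : Matrix (Fin 2) (Fin 2) ℤ) = !![1, 0; 11, 1] := rfl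
@[simp] lemma coe_V : (V : Matrix (Fin 2) (Fin 2) ℤ) = !![2, -1; 11, -5] := rfl
@[simp] lemma coe_A : (A : Matrix (Fin 2) (Fin 2) ℤ) = !![-2, -1; 11, 5] := rfl
@[simp] lemma coe_G4 : (G4 : Matrix (Fin 2) (Fin 2) ℤ) = !![10, 3; 33, 10] := rfl
@[simp] lemma coe_G5 : (G5 : Matrix (Fin 2) (Fin 2) ℤ) = !![23, 8; 66, 23] := rfl
@[simp] lemma coe_W : (W : Matrix (Fin 2) (Fin 2) ℤ) = !![23, -6; -88, 23] := rfl
@[simp] lemma coe_R : (R : Matrix (Fin 2) (Fin 2) ℤ) = !![3, 1; 11, 4] := rfl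

def Δ : Subgroup SL(2, ℤ) := Subgroup.closure {T, U, V, A, G4, G5, W, -1}

lemma T_mem : T ∈ Δ := Subgroup.subset_closure (by simp)
lemma U_mem : U ∈ Δ := Subgroup.subset_closure (by simp)
lemma V_mem : V ∈ Δ := Subgroup.subset_closure (by simp)
lemma A_mem : A ∈ Δ := Subgroup.subset_closure (by simp)
lemma G4_mem : G4 ∈ Δ := Subgroup.subset_closure (by simp)
lemma G5_mem : G5 ∈ Δ := Subgroup.subset_closure (by simp)
lemma W_mem : W ∈ Δ := Subgroup.subset_closure (by simp)
lemma neg_one_mem : -1 ∈ Δ := Subgroup.subset_closure (by simp)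

lemma Δ_le_Gamma0 : Δ ≤ Gamma0 11 := by
  rw [Δ, Subgroup.closure_le]
  intro M hM
  rw [SetLike.mem_coe, mem_Gamma0_iff_dvd]
  simp only [Set.mem_insert_iff, Set.mem_singleton_iff] at hM
  rcases hM with rfl | rfl | rfl | rfl | rfl | rfl | rfl | rfl <;> simp [coe_T]

lemma R_mul_T_zpow_mul_R_inv_mem (n : ℤ) : R * T ^ n * R⁻¹ ∈ Δ := by
  have h : R * T * R⁻¹ = -1 * W⁻¹ * G4⁻¹ := by
    ext i j
    fin_cases i <;> fin_cases j <;> simp [coe_T, coe_inv, adjugate_fin_two]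
  rw [← conj_zpow, h]
  exact zpow_mem (mul_mem (mul_mem neg_one_mem (inv_mem W_mem)) (inv_mem G4_mem)) n

variable {M : SL(2, ℤ)}

lemma mem_or_mul_R_inv_mem_mul_left_iff {X : SL(2, ℤ)} (hX : X ∈ Δ) :
    (X * M ∈ Δ ∨ X * M * R⁻¹ ∈ Δ) ↔ (M ∈ Δ ∨ M * R⁻¹ ∈ Δ) := by
  rw [mul_assoc, mul_mem_cancel_left hX, mul_mem_cancel_left hX]

lemma mem_of_c_eq_zero (hc : M 1 0 = 0) : M ∈ Δ := by
  have hdet := M.det_coe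
  rw [det_fin_two, hc, mul_zero, sub_zero] at hdet
  rcases Int.eq_one_or_neg_one_of_mul_eq_one' hdet with ⟨ha, -⟩ | ⟨ha, -⟩
  · obtain ⟨n, rfl⟩ := exists_eq_mul_T_zpow_of_col_eq (M := M) (B := 1) (by simp [ha])
      (by simp [hc])
    exact mul_mem (one_mem _) (zpow_mem T_mem n)
  · obtain ⟨n, rfl⟩ := exists_eq_mul_T_zpow_of_col_eq (M := M) (B := -1) (by simp [ha])
      (by simp [hc])
    exact mul_mem neg_one_mem (zpow_mem T_mem n)

lemma mul_R_inv_mem_of_col_eq {Y : SL(2, ℤ)} (hY : Y ∈ Δ) (h0 : M 0 0 = (Y * R) 0 0)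
    (h1 : M 1 0 = (Y * R) 1 0) : M * R⁻¹ ∈ Δ := by
  obtain ⟨n, rfl⟩ := exists_eq_mul_T_zpow_of_col_eq h0 h1
  simpa only [mul_assoc] using mul_mem hY (R_mul_T_zpow_mul_R_inv_mem n)

lemma mul_R_inv_mem_of_c_eq_eleven (hc : M 1 0 = 11)
    (ha : M 0 0 = 3 ∨ M 0 0 = -3 ∨ M 0 0 = 4 ∨ M 0 0 = -4) : M * R⁻¹ ∈ Δ := by
  rcases ha with ha | ha | ha | ha
  · exact mul_R_inv_mem_of_col_eq (one_mem _) (by simp [ha]) (by simp [hc])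
  · exact mul_R_inv_mem_of_col_eq (mul_mem neg_one_mem W_mem) (by simp [ha]) (by simp [hc])
  · exact mul_R_inv_mem_of_col_eq (mul_mem neg_one_mem (inv_mem V_mem))
      (by simp [ha, coe_inv, adjugate_fin_two]) (by simp [hc, coe_inv, adjugate_fin_two])
  · exact mul_R_inv_mem_of_col_eq (mul_mem (mul_mem neg_one_mem (inv_mem A_mem)) W_mem)
      (by simp [ha, coe_inv, adjugate_fin_two]) (by simp [hc, coe_inv, adjugate_fin_two])

/-- With `x = a / (11 e)`, the ten intervals are the sets where `|r x + s| < 1` for the bottom rows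
`(r, s)` of `U^{±1}, V^{±1}, A^{±1}, G4^{±1}, G5^{±1}`; they cover `[-1/2, 1/2]` except for the
points `0, ±3/11, ±1/3, ±4/11`. -/
lemma isometric_intervals_cover {a e : ℤ} (he : 0 < e) (h1 : -11 * e ≤ 2 * a)
    (h2 : 2 * a ≤ 11 * e) (ha0 : a ≠ 0) (h3 : 3 * a ≠ 11 * e ∧ 3 * a ≠ -11 * e)
    (h34 : a ≠ 3 * e ∧ a ≠ -3 * e ∧ a ≠ 4 * e ∧ a ≠ -4 * e) :
    (-2 * e < a ∧ a < 0) ∨ (0 < a ∧ a < 2 * e) ∨ (4 * e < a ∧ a < 6 * e) ∨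
      (e < a ∧ a < 3 * e) ∨ (-6 * e < a ∧ a < -4 * e) ∨ (-3 * e < a ∧ a < -e) ∨
      (-11 * e < 3 * a ∧ 3 * a < -9 * e) ∨ (9 * e < 3 * a ∧ 3 * a < 11 * e) ∨
      (-4 * e < a ∧ 3 * a < -11 * e) ∨ (11 * e < 3 * a ∧ a < 4 * e) := by
  omega

lemma exists_mem_natAbs_c_lt {N : SL(2, ℤ)} (hN : N ∈ Gamma0 11) (ha : |2 * N 0 0| ≤ N 1 0)
    (hs : ¬(N 1 0 = 11 ∧ (N 0 0 = 3 ∨ N 0 0 = -3 ∨ N 0 0 = 4 ∨ N 0 0 = -4))) :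
    ∃ Y ∈ Δ, ((Y * N) 1 0).natAbs < (N 1 0).natAbs := by
  have hdet := N.det_coe
  rw [det_fin_two] at hdet
  obtain ⟨e, he⟩ : (11 : ℤ) ∣ N 1 0 := mem_Gamma0_iff_dvd.1 hN
  have hunit (g : ℤ) (hga : g ∣ N 0 0) (hgc : g ∣ N 1 0) : g = 1 ∨ g = -1 :=
    Int.isUnit_iff.1 ((show IsCoprime (N 0 0) (N 1 0) from
      ⟨N 1 1, -N 0 1, by linear_combination hdet⟩).isUnit_of_dvd' hga hgc)
  rw [abs_le] at ha
  -- a coprime first column rules out every uncovered point except those excluded by `hs`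
  have ha0 : N 0 0 ≠ 0 := fun h => by
    rcases hunit (N 1 0) (h ▸ dvd_zero _) dvd_rfl with h | h <;> omega
  have h3 : 3 * N 0 0 ≠ 11 * e ∧ 3 * N 0 0 ≠ -11 * e := by
    constructor <;> intro h
    · rcases hunit _ dvd_rfl ⟨3, by linarith⟩ with h' | h' <;> omega
    · rcases hunit _ dvd_rfl ⟨-3, by linarith⟩ with h' | h' <;> omega
  have h34 : N 0 0 ≠ 3 * e ∧ N 0 0 ≠ -3 * e ∧ N 0 0 ≠ 4 * e ∧ N 0 0 ≠ -4 * e := by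
    refine ⟨?_, ?_, ?_, ?_⟩ <;> intro h <;>
      rcases hunit e ⟨_, h.trans (mul_comm _ _)⟩ ⟨11, he.trans (mul_comm _ _)⟩ with h' | h' <;>
      omega
  have via (Y : SL(2, ℤ)) (hY : Y ∈ Δ)
      (hlt : (Y 1 0 * N 0 0 + Y 1 1 * (11 * e)).natAbs < (11 * e).natAbs) :
      ∃ Y ∈ Δ, ((Y * N) 1 0).natAbs < (N 1 0).natAbs :=
    ⟨Y, hY, by simpa [mul_apply, Fin.sum_univ_two, he] using hlt⟩
  rcases isometric_intervals_cover (by omega) (by omega) (by omega) ha0 h3 h34 with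
    h | h | h | h | h | h | h | h | h | h
  · exact via U U_mem (by simp; omega)
  · exact via U⁻¹ (inv_mem U_mem) (by simp [coe_inv, adjugate_fin_two]; omega)
  · exact via V V_mem (by simp; omega)
  · exact via V⁻¹ (inv_mem V_mem) (by simp [coe_inv, adjugate_fin_two]; omega)
  · exact via A A_mem (by simp; omega)
  · exact via A⁻¹ (inv_mem A_mem) (by simp [coe_inv, adjugate_fin_two]; omega)
  · exact via G4 G4_mem (by simp; omega)
  · exact via G4⁻¹ (inv_mem G4_mem) (by simp [coe_inv, adjugate_fin_two]; omega)
  · exact via G5 G5_mem (by simp; omega)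
  · exact via G5⁻¹ (inv_mem G5_mem) (by simp [coe_inv, adjugate_fin_two]; omega)

lemma exists_mem_normalize (hc : M 1 0 ≠ 0) : ∃ X ∈ Δ,
    ((X * M) 1 0).natAbs = (M 1 0).natAbs ∧ |2 * (X * M) 0 0| ≤ (X * M) 1 0 := by
  obtain ⟨σ, hσ, hpos, hσc⟩ :
      ∃ σ ∈ Δ, 0 < (σ * M) 1 0 ∧ ((σ * M) 1 0).natAbs = (M 1 0).natAbs := by
    rcases hc.lt_or_gt with h | h
    · exact ⟨-1, neg_one_mem, by simp; omega⟩
    · exact ⟨1, one_mem _, by simp; omega⟩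
  obtain ⟨n, hn⟩ := Int.exists_abs_two_mul_add_mul_le ((σ * M) 0 0) hpos
  refine ⟨T ^ n * σ, mul_mem (zpow_mem T_mem n) hσ, ?_⟩
  rw [mul_assoc, T_pow_mul_apply_one, T_zpow_mul_apply_zero_zero]
  exact ⟨hσc, hn⟩

theorem mem_or_mul_R_inv_mem_of_mem_Gamma0 (hM : M ∈ Gamma0 11) : M ∈ Δ ∨ M * R⁻¹ ∈ Δ := by
  induction hn : (M 1 0).natAbs using Nat.strong_induction_on generalizing M with | _ n ih =>
  rcases eq_or_ne (M 1 0) 0 with hc | hc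
  · exact .inl (mem_of_c_eq_zero hc)
  obtain ⟨X, hX, hXc, hXa⟩ := exists_mem_normalize hc
  rw [← mem_or_mul_R_inv_mem_mul_left_iff hX]
  have hXM : X * M ∈ Gamma0 11 := mul_mem (Δ_le_Gamma0 hX) hM
  by_cases hs : (X * M) 1 0 = 11 ∧
      ((X * M) 0 0 = 3 ∨ (X * M) 0 0 = -3 ∨ (X * M) 0 0 = 4 ∨ (X * M) 0 0 = -4)
  · exact .inr (mul_R_inv_mem_of_c_eq_eleven hs.1 hs.2)
  obtain ⟨Y, hY, hlt⟩ := exists_mem_natAbs_c_lt hXM hXa hs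
  rw [← mem_or_mul_R_inv_mem_mul_left_iff hY]
  exact ih _ (by omega) (mul_mem (Δ_le_Gamma0 hY) hXM) rfl

instance : Δ.FiniteIndex := by
  refine ⟨?_⟩
  rw [← Subgroup.relIndex_mul_index Δ_le_Gamma0]
  refine mul_ne_zero (Subgroup.relIndex_ne_zero_of_forall_mem_or_mul_mem (w := R) ?_ ?_)
    Subgroup.FiniteIndex.index_ne_zero
  · exact mem_Gamma0_iff_dvd.2 (by simp)
  · intro g hg
    rcases mem_or_mul_R_inv_mem_of_mem_Gamma0 (inv_mem hg) with h | h
    · exact .inl (inv_mem_iff.1 h)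
    · exact .inr (by simpa using inv_mem h)

end Gamma0Eleven

section Fricke

open Gamma0Eleven

lemma coe_mapSL (M : SL(2, ℤ)) :
    (mapSL M : Matrix (Fin 2) (Fin 2) ℝ) = !![(M 0 0 : ℝ), M 0 1; M 1 0, M 1 1] :=
  eta_fin_two _

lemma coe_gamma2 : (gamma2 : Matrix (Fin 2) (Fin 2) ℝ) = !![0, -1 / √11; √11, 0] := rfl

lemma coe_gamma3 :
    (gamma3 : Matrix (Fin 2) (Fin 2) ℝ) = !![√11, 5 / √11; 2 * √11, √11] := rfl

lemma mapSL_T : mapSL T = gamma1 := by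
  ext i j; fin_cases i <;> fin_cases j <;> simp [coe_mapSL, coe_T, gamma1]

lemma mapSL_G4 : mapSL G4 = gamma4 := by
  ext i j; fin_cases i <;> fin_cases j <;> simp [coe_mapSL, gamma4]

lemma mapSL_G5 : mapSL G5 = gamma5 := by
  ext i j; fin_cases i <;> fin_cases j <;> simp [coe_mapSL, gamma5]

lemma gamma2_mul_self : gamma2 * gamma2 = mapSL (-1) := by
  have : √11 ≠ 0 := by positivity
  ext i j; fin_cases i <;> fin_cases j <;> simp [coe_mapSL, coe_gamma2]
  field_simp

lemma gamma2_mul_gamma3 : gamma2 * gamma3 = mapSL A := by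
  have : √11 ≠ 0 := by positivity
  ext i j; fin_cases i <;> fin_cases j <;> simp [coe_mapSL, coe_gamma2, coe_gamma3] <;>
    field_simp

lemma gamma2_mul_mapSL_mul_inv {M M' : SL(2, ℤ)} (h00 : M' 0 0 = M 1 1)
    (h01 : 11 * M' 0 1 = -M 1 0) (h10 : M' 1 0 = -11 * M 0 1) (h11 : M' 1 1 = M 0 0) :
    gamma2 * mapSL M * gamma2⁻¹ = mapSL M' := by
  have hs : √11 ≠ 0 := by positivity
  have h01' : (M' 0 1 : ℝ) = -(M 1 0 : ℝ) / 11 := by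
    rw [eq_div_iff (by norm_num)]
    exact_mod_cast (by linarith : M' 0 1 * 11 = -M 1 0)
  refine Subtype.ext ?_
  rw [coe_mul, coe_mul, coe_inv, coe_gamma2, coe_mapSL, coe_mapSL, adjugate_fin_two_of,
    mul_fin_two, mul_fin_two, h00, h10, h11, h01']
  ext i j; fin_cases i <;> fin_cases j <;> simp <;> field_simp <;>
    simp [Real.sq_sqrt (show (0 : ℝ) ≤ 11 by norm_num)] <;> ring

lemma gamma2_conj_mem_map_Gamma0 {g : SL(2, ℝ)} (hg : g ∈ (Gamma0 11).map mapSL) :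
    gamma2 * g * gamma2⁻¹ ∈ (Gamma0 11).map mapSL := by
  obtain ⟨M, hM, rfl⟩ := hg
  obtain ⟨c, hc⟩ : (11 : ℤ) ∣ M 1 0 := mem_Gamma0_iff_dvd.1 hM
  have hdet := M.det_coe
  rw [det_fin_two, hc] at hdet
  let M' : SL(2, ℤ) := ⟨!![M 1 1, -c; -11 * M 0 1, M 0 0], by
    rw [det_fin_two_of]; linear_combination hdet⟩
  refine ⟨M', mem_Gamma0_iff_dvd.2 ⟨-M 0 1, by simp [M']⟩, ?_⟩
  exact (gamma2_mul_mapSL_mul_inv (by simp [M']) (by simp [M', hc]) (by simp [M'])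
    (by simp [M'])).symm

end Fricke

def gammaGroup : Subgroup SL(2, ℝ) := Subgroup.closure {gamma1, gamma2, gamma3, gamma4, gamma5}

namespace gammaGroup

open Gamma0Eleven

lemma gamma_mem {g : SL(2, ℝ)} (hg : g ∈ ({gamma1, gamma2, gamma3, gamma4, gamma5} : Set _)) :
    g ∈ gammaGroup :=
  Subgroup.subset_closure hg

lemma Δ_le_comap : Δ ≤ gammaGroup.comap mapSL := by
  have h1 : gamma1 ∈ gammaGroup := gamma_mem (by simp)
  have h2 : gamma2 ∈ gammaGroup := gamma_mem (by simp)
  have hA : mapSL A ∈ gammaGroup := gamma2_mul_gamma3 ▸ mul_mem h2 (gamma_mem (by simp))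
  have hN : mapSL (-1) ∈ gammaGroup := gamma2_mul_self ▸ mul_mem h2 h2
  have h5 : mapSL G5 ∈ gammaGroup := mapSL_G5 ▸ gamma_mem (by simp)
  rw [Δ, Subgroup.closure_le]
  intro M hM
  simp only [Set.mem_insert_iff, Set.mem_singleton_iff] at hM
  rw [SetLike.mem_coe, Subgroup.mem_comap]
  rcases hM with rfl | rfl | rfl | rfl | rfl | rfl | rfl | rfl
  · exact mapSL_T ▸ h1
  · rw [← gamma2_mul_mapSL_mul_inv (M := T⁻¹) (by simp) (by simp) (by simp) (by simp)]
    exact mul_mem (mul_mem h2 (by simpa [mapSL_T] using inv_mem h1)) (inv_mem h2)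
  · rw [← gamma2_mul_mapSL_mul_inv (M := -A⁻¹) (by simp [coe_inv, adjugate_fin_two])
      (by simp [coe_inv, adjugate_fin_two]) (by simp [coe_inv, adjugate_fin_two])
      (by simp [coe_inv, adjugate_fin_two]), ← neg_one_mul, map_mul, map_inv]
    exact mul_mem (mul_mem h2 (mul_mem hN (inv_mem hA))) (inv_mem h2)
  · exact hA
  · exact mapSL_G4 ▸ gamma_mem (by simp)
  · exact h5
  · rw [← gamma2_mul_mapSL_mul_inv (M := G5) (by simp) (by simp) (by simp) (by simp)]
    exact mul_mem (mul_mem h2 h5) (inv_mem h2)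
  · exact hN

lemma mem_or_gamma2_mul_mem {g : SL(2, ℝ)} (hg : g ∈ gammaGroup) :
    g ∈ (Gamma0 11).map mapSL ∨ gamma2 * g ∈ (Gamma0 11).map mapSL := by
  have hΛ {M : SL(2, ℤ)} (hM : M ∈ Δ) : mapSL M ∈ (Gamma0 11).map mapSL :=
    ⟨M, Δ_le_Gamma0 hM, rfl⟩
  refine Subgroup.forall_mem_closure_mem_or_mul_mem (fun _ => gamma2_conj_mem_map_Gamma0)
    (gamma2_mul_self ▸ hΛ neg_one_mem) ?_ g hg
  intro s hs
  simp only [Set.mem_insert_iff, Set.mem_singleton_iff] at hs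
  rcases hs with rfl | rfl | rfl | rfl | rfl
  · exact .inl (mapSL_T ▸ hΛ T_mem)
  · exact .inr (gamma2_mul_self ▸ hΛ neg_one_mem)
  · exact .inr (gamma2_mul_gamma3 ▸ hΛ A_mem)
  · exact .inl (mapSL_G4 ▸ hΛ G4_mem)
  · exact .inl (mapSL_G5 ▸ hΛ G5_mem)

end gammaGroup

/-- The subgroup of `SL(2,ℝ)` generated by `γ₁, …, γ₅` is commensurable with the image
of `SL(2,ℤ)` in `SL(2,ℝ)`: their intersection has finite index in each. -/
theorem generated_subgroup_commensurable_modular :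
    Subgroup.Commensurable (Subgroup.closure {gamma1, gamma2, gamma3, gamma4, gamma5})
      mapSL.range := by
  refine ⟨?_, ?_⟩
  · rw [← Subgroup.index_comap]
    exact (Subgroup.finiteIndex_of_le gammaGroup.Δ_le_comap).index_ne_zero
  · refine Subgroup.relIndex_ne_zero_of_forall_mem_or_mul_mem (w := gamma2)
      (gammaGroup.gamma_mem (by simp)) fun g hg => ?_
    exact (gammaGroup.mem_or_gamma2_mul_mem hg).imp (Subgroup.map_le_range _ _ ·)
      (Subgroup.map_le_range _ _ ·)
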